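/- arXiv:2012.00951 — 6 statements merged into one kernel-verified Lean document; each statement's English description precedes it below -/
import Mathlib

section
/- Let n, m be positive integers, let f̂ : ℝⁿ × ℝᵐ → ℝⁿ and δ : ℝⁿ × ℝᵐ → ℝⁿ be continuous with δ ≥ 0 componentwise, and define 𝕏₊(w) = Icc(f̂(w) − δ(w), f̂(w) + δ(w)) ⊆ ℝⁿ for w ∈ ℝⁿ × ℝᵐ. Then for every closed set K ⊆ ℝⁿ, the set { w ∈ ℝⁿ × ℝᵐ : 𝕏₊(w) ⊆ K } is closed in ℝⁿ × ℝᵐ. -/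
open Set Filter Topology

/-- The set of possible next states: the componentwise box
`Icc (f̂(w) - δ(w)) (f̂(w) + δ(w))`. -/
def nextSet {n m : ℕ} (fhat del : (Fin n → ℝ) × (Fin m → ℝ) → Fin n → ℝ)
    (w : (Fin n → ℝ) × (Fin m → ℝ)) : Set (Fin n → ℝ) :=
  Set.Icc (fhat w - del w) (fhat w + del w)

/-- Projection of a subset of the state-control space onto the state component. -/
def proj {n m : ℕ} (W : Set ((Fin n → ℝ) × (Fin m → ℝ))) : Set (Fin n → ℝ) :=
  Prod.fst '' W

/-! Parametrising the box `Icc (f - d) (f + d)` by `f + t * d` with `t` in the unit cube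
`Icc (-1) 1` writes `{w | Icc (f w - d w) (f w + d w) ⊆ K}` as an intersection of preimages
of `K` under the continuous maps `w ↦ f w + t * d w`. -/

namespace Set

section LinearOrderedField

variable {K : Type*} [Field K] [LinearOrder K] [IsStrictOrderedRing K]

theorem image_add_mul_Icc_neg_one_one (x : K) {r : K} (hr : 0 ≤ r) :
    (fun t => x + t * r) '' Icc (-1) 1 = Icc (x - r) (x + r) := by
  rw [show (fun t => x + t * r) = (x + ·) ∘ (· * r) from rfl, image_comp,
    image_mul_right_Icc (by norm_num) hr, image_const_add_Icc, neg_one_mul, one_mul,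
    sub_eq_add_neg]

theorem pi_image_add_mul_Icc_neg_one_one {ι : Type*} (f : ι → K) {d : ι → K} (hd : 0 ≤ d) :
    (fun t => f + t * d) '' Icc (-1) 1 = Icc (f - d) (f + d) := by
  rw [← pi_univ_Icc, ← pi_univ_Icc]
  exact (piMap_image_univ_pi (fun i t => f i + t * d i) _).trans
    (pi_congr rfl fun i _ => image_add_mul_Icc_neg_one_one (f i) (hd i))

end LinearOrderedField

theorem isClosed_setOf_Icc_sub_add_subset {X ι : Type*} [TopologicalSpace X]
    {f d : X → ι → ℝ} (hf : Continuous f) (hd : Continuous d) (hd0 : ∀ x, 0 ≤ d x)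
    {K : Set (ι → ℝ)} (hK : IsClosed K) :
    IsClosed {x | Icc (f x - d x) (f x + d x) ⊆ K} := by
  have hset : {x | Icc (f x - d x) (f x + d x) ⊆ K} =
      ⋂ t ∈ Icc (-1 : ι → ℝ) 1, (fun x => f x + t * d x) ⁻¹' K := by
    ext x
    simp only [← pi_image_add_mul_Icc_neg_one_one (f x) (hd0 x), image_subset_iff,
      mem_ofPred_eq, mem_iInter]
    rfl
  rw [hset]
  exact isClosed_biInter fun t _ => hK.preimage (hf.add (continuous_const.mul hd))

end Set

theorem stmt5_general {n m : ℕ}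
    (fhat del : (Fin n → ℝ) × (Fin m → ℝ) → Fin n → ℝ)
    (hfc : Continuous fhat) (hdc : Continuous del)
    (hd0 : ∀ w, (0 : Fin n → ℝ) ≤ del w)
    (K : Set (Fin n → ℝ)) (hK : IsClosed K) :
    IsClosed {w : (Fin n → ℝ) × (Fin m → ℝ) | nextSet fhat del w ⊆ K} :=
  isClosed_setOf_Icc_sub_add_subset hfc hdc hd0 hK

theorem stmt5 {n m : ℕ} (hn : 0 < n) (hm : 0 < m)
    (fhat del : (Fin n → ℝ) × (Fin m → ℝ) → Fin n → ℝ)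
    (hfc : Continuous fhat) (hdc : Continuous del)
    (hd0 : ∀ w, (0 : Fin n → ℝ) ≤ del w)
    (K : Set (Fin n → ℝ)) (hK : IsClosed K) :
    IsClosed {w : (Fin n → ℝ) × (Fin m → ℝ) | nextSet fhat del w ⊆ K} :=
  stmt5_general fhat del hfc hdc hd0 K hK
end

section
/- Let n, m be positive integers, let f̂ : ℝⁿ × ℝᵐ → ℝⁿ and δ : ℝⁿ × ℝᵐ → ℝⁿ be continuous with δ ≥ 0 componentwise, and define 𝕏₊(w) = Icc(f̂(w) − δ(w), f̂(w) + δ(w)) ⊆ ℝⁿ. For 𝕎 ⊆ ℝⁿ × ℝᵐ define the mapping ℐ(𝕎) = { w ∈ 𝕎 : 𝕏₊(w) ⊆ proj(𝕎) }, where proj(𝕎) is the projection of 𝕎 onto the state component. If 𝕎 is compact, then ℐ(𝕎) is compact. -/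
/-!
`ℐ(𝕎)` is `𝕎` cut down by the condition `𝕏₊(w) ⊆ proj 𝕎`, and `proj 𝕎` is compact, hence closed.
Because `δ ≥ 0`, the box `𝕏₊(w)` is the image of the unit box under
`t ↦ f̂(w) - δ(w) + t * 2δ(w)`, so the condition is an intersection over `t` of preimages of the
closed set `proj 𝕎` under maps continuous in `w`, hence a closed condition.
-/

open Set Filter Topology

/-- The mapping `ℐ(𝕎) = { w ∈ 𝕎 : 𝕏₊(w) ⊆ proj 𝕎 }` (Definition 4). -/
def Imap {n m : ℕ} (fhat del : (Fin n → ℝ) × (Fin m → ℝ) → Fin n → ℝ)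
    (W : Set ((Fin n → ℝ) × (Fin m → ℝ))) : Set ((Fin n → ℝ) × (Fin m → ℝ)) :=
  {w ∈ W | nextSet fhat del w ⊆ proj W}

theorem Pi.Icc_eq_image_Icc_zero_one {ι 𝕜 : Type*} [Field 𝕜] [LinearOrder 𝕜] [IsStrictOrderedRing 𝕜]
    {a b : ι → 𝕜} (hab : a ≤ b) :
    Icc a b = (fun t => a + t * (b - a)) '' Icc 0 1 := by
  have hseg : ∀ i, Icc (a i) (b i) = (fun s => a i + s * (b i - a i)) '' Icc 0 1 := fun i => by
    rw [← segment_eq_Icc (hab i), segment_eq_image']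
    rfl
  ext x
  constructor
  · intro hx
    have hxi : ∀ i, x i ∈ Icc (a i) (b i) := fun i => ⟨hx.1 i, hx.2 i⟩
    simp only [hseg] at hxi
    choose t ht hxt using hxi
    exact ⟨t, ⟨fun i => (ht i).1, fun i => (ht i).2⟩, funext hxt⟩
  · rintro ⟨t, ht, rfl⟩
    have hti : ∀ i, a i + t i * (b i - a i) ∈ Icc (a i) (b i) := fun i => by
      rw [hseg]; exact ⟨t i, ⟨ht.1 i, ht.2 i⟩, rfl⟩
    exact ⟨fun i => (hti i).1, fun i => (hti i).2⟩

theorem isClosed_setOf_Icc_subset {X ι 𝕜 : Type*} [TopologicalSpace X] [Field 𝕜] [LinearOrder 𝕜]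
    [IsStrictOrderedRing 𝕜] [TopologicalSpace 𝕜] [IsTopologicalRing 𝕜]
    {lo hi : X → ι → 𝕜} (hlo : Continuous lo) (hhi : Continuous hi) (hle : ∀ w, lo w ≤ hi w)
    {K : Set (ι → 𝕜)} (hK : IsClosed K) : IsClosed {w | Icc (lo w) (hi w) ⊆ K} := by
  have hset : {w | Icc (lo w) (hi w) ⊆ K} =
      ⋂ t ∈ Icc (0 : ι → 𝕜) 1, (fun w => lo w + t * (hi w - lo w)) ⁻¹' K := by
    ext w
    simp only [mem_ofPred_eq, Pi.Icc_eq_image_Icc_zero_one (hle w), image_subset_iff, mem_iInter]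
    rfl
  rw [hset]
  exact isClosed_biInter fun t _ => hK.preimage (by fun_prop)

theorem stmt6_general {n m : ℕ}
    (fhat del : (Fin n → ℝ) × (Fin m → ℝ) → Fin n → ℝ)
    (hfc : Continuous fhat) (hdc : Continuous del)
    (hd0 : ∀ w, (0 : Fin n → ℝ) ≤ del w)
    (W : Set ((Fin n → ℝ) × (Fin m → ℝ))) (hWc : IsCompact W) :
    IsCompact (Imap fhat del W) :=
  hWc.inter_right <| isClosed_setOf_Icc_subset (hfc.sub hdc) (hfc.add hdc)
    (fun w => (sub_le_self _ (hd0 w)).trans (le_add_of_nonneg_right (hd0 w)))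
    (hWc.image continuous_fst).isClosed

theorem stmt6 {n m : ℕ} (hn : 0 < n) (hm : 0 < m)
    (fhat del : (Fin n → ℝ) × (Fin m → ℝ) → Fin n → ℝ)
    (hfc : Continuous fhat) (hdc : Continuous del)
    (hd0 : ∀ w, (0 : Fin n → ℝ) ≤ del w)
    (W : Set ((Fin n → ℝ) × (Fin m → ℝ))) (hWc : IsCompact W) :
    IsCompact (Imap fhat del W) :=
  stmt6_general fhat del hfc hdc hd0 W hWc
end

section
/- Let n, m be positive integers, let f̂ : ℝⁿ × ℝᵐ → ℝⁿ and δ : ℝⁿ × ℝᵐ → ℝⁿ be continuous with δ ≥ 0 componentwise, and define 𝕏₊(w) = Icc(f̂(w) − δ(w), f̂(w) + δ(w)) ⊆ ℝⁿ. For 𝕎 ⊆ ℝⁿ × ℝᵐ define ℐ(𝕎) = { w ∈ 𝕎 : 𝕏₊(w) ⊆ proj(𝕎) } and ℐ^∞(𝕎) = ⋂_{i ≥ 1} ℐ^i(𝕎), where ℐ^i denotes the i-fold iterate of ℐ. If 𝕎 is compact, then ℐ^∞(𝕎) is compact and robust invariant for the plant set, i.e. for every w ∈ ℐ^∞(𝕎),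 𝕏₊(w) ⊆ proj(ℐ^∞(𝕎)). -/
/-!
Each `ℐ` preserves compactness: `proj 𝕎` is compact, and `{w | 𝕏₊(w) ⊆ K}` is closed for closed
`K`, because it is the intersection over all `y` of the preimages of `K` under the continuous
clamping maps `w ↦ (f̂ w - δ w) ⊔ (y ⊓ (f̂ w + δ w))`. Hence `ℐ^∞(𝕎)` is an intersection of a
decreasing sequence of compact sets. For invariance, `w ∈ ℐ^{i+2}(𝕎)` gives
`𝕏₊(w) ⊆ proj ℐ^{i+1}(𝕎)` for every `i`, and by Cantor's intersection theorem, applied to the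
fibres, the projection commutes with decreasing intersections of compact sets.
-/

open Set

def Iinf {n m : ℕ} (fhat del : (Fin n → ℝ) × (Fin m → ℝ) → Fin n → ℝ)
    (W : Set ((Fin n → ℝ) × (Fin m → ℝ))) : Set ((Fin n → ℝ) × (Fin m → ℝ)) :=
  ⋂ i : ℕ, (Imap fhat del)^[i + 1] W

instance Pi.continuousSup {ι : Type*} {π : ι → Type*} [∀ i, TopologicalSpace (π i)]
    [∀ i, Max (π i)] [∀ i, ContinuousSup (π i)] : ContinuousSup (∀ i, π i) where
  continuous_sup := continuous_pi fun i =>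
    ((continuous_apply i).comp continuous_fst).sup ((continuous_apply i).comp continuous_snd)

instance Pi.continuousInf {ι : Type*} {π : ι → Type*} [∀ i, TopologicalSpace (π i)]
    [∀ i, Min (π i)] [∀ i, ContinuousInf (π i)] : ContinuousInf (∀ i, π i) where
  continuous_inf := continuous_pi fun i =>
    ((continuous_apply i).comp continuous_fst).inf ((continuous_apply i).comp continuous_snd)

theorem isClosed_setOf_Icc_subset_s8 {X L : Type*} [TopologicalSpace X] [Lattice L]
    [TopologicalSpace L] [ContinuousSup L] [ContinuousInf L] {a b : X → L}
    (ha : Continuous a) (hb : Continuous b) (hab : ∀ x, a x ≤ b x) {K : Set L}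
    (hK : IsClosed K) : IsClosed {x | Icc (a x) (b x) ⊆ K} := by
  have h_eq : {x | Icc (a x) (b x) ⊆ K} = ⋂ y, (fun x => a x ⊔ (y ⊓ b x)) ⁻¹' K := by
    ext x
    simp only [mem_ofPred_eq, mem_iInter, mem_preimage]
    refine ⟨fun h y => h ⟨le_sup_left, sup_le (hab x) inf_le_right⟩, fun h y hy => ?_⟩
    simpa only [inf_eq_left.2 hy.2, sup_eq_right.2 hy.1] using h y
  rw [h_eq]
  exact isClosed_iInter fun y => hK.preimage (ha.sup (continuous_const.inf hb))

theorem image_iInter_of_directed_isCompact {X Y ι : Type*} [TopologicalSpace X] [T2Space X]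
    [TopologicalSpace Y] [T1Space Y] [Nonempty ι] {K : ι → Set X}
    (hd : Directed (· ⊇ ·) K) (hK : ∀ i, IsCompact (K i)) {f : X → Y} (hf : Continuous f) :
    f '' ⋂ i, K i = ⋂ i, f '' K i := by
  refine (image_iInter_subset K f).antisymm fun y hy => ?_
  have h_fibre_closed : IsClosed (f ⁻¹' {y}) := isClosed_singleton.preimage hf
  obtain ⟨x, hx⟩ := IsCompact.nonempty_iInter_of_directed_nonempty_isCompact_isClosed
    (fun i => K i ∩ f ⁻¹' {y})
    (fun i j =>
      let ⟨k, hki, hkj⟩ := hd i j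
      ⟨k, inter_subset_inter_left _ hki, inter_subset_inter_left _ hkj⟩)
    (fun i => by
      obtain ⟨x, hxK, rfl⟩ := mem_iInter.1 hy i
      exact ⟨x, hxK, rfl⟩)
    (fun i => (hK i).inter_right h_fibre_closed)
    (fun i => (hK i).isClosed.inter h_fibre_closed)
  simp only [mem_iInter, mem_inter_iff, mem_preimage, mem_singleton_iff] at hx
  exact ⟨x, mem_iInter.2 fun i => (hx i).1, (hx (Classical.arbitrary ι)).2⟩

section Imap

variable {n m : ℕ} {fhat del : (Fin n → ℝ) × (Fin m → ℝ) → Fin n → ℝ}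
  {W : Set ((Fin n → ℝ) × (Fin m → ℝ))}

theorem Imap_subset : Imap fhat del W ⊆ W := sep_subset _ _

theorem antitone_iterate_Imap : Antitone fun i => (Imap fhat del)^[i] W :=
  antitone_nat_of_succ_le fun i => by
    rw [Function.iterate_succ_apply']
    exact Imap_subset

theorem isCompact_Imap (hfc : Continuous fhat) (hdc : Continuous del)
    (hd0 : ∀ w, (0 : Fin n → ℝ) ≤ del w) (hW : IsCompact W) : IsCompact (Imap fhat del W) :=
  hW.inter_right <| isClosed_setOf_Icc_subset_s8 (hfc.sub hdc) (hfc.add hdc)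
    (fun w => sub_le_self _ (hd0 w) |>.trans (le_add_of_nonneg_right (hd0 w)))
    (hW.image continuous_fst).isClosed

theorem isCompact_iterate_Imap (hfc : Continuous fhat) (hdc : Continuous del)
    (hd0 : ∀ w, (0 : Fin n → ℝ) ≤ del w) (hW : IsCompact W) (i : ℕ) :
    IsCompact ((Imap fhat del)^[i] W) := by
  induction i with
  | zero => exact hW
  | succ i ih =>
    rw [Function.iterate_succ_apply']
    exact isCompact_Imap hfc hdc hd0 ih

end Imap

theorem stmt8_general {n m : ℕ}
    (fhat del : (Fin n → ℝ) × (Fin m → ℝ) → Fin n → ℝ)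
    (hfc : Continuous fhat) (hdc : Continuous del)
    (hd0 : ∀ w, (0 : Fin n → ℝ) ≤ del w)
    (W : Set ((Fin n → ℝ) × (Fin m → ℝ))) (hWc : IsCompact W) :
    IsCompact (Iinf fhat del W) ∧
      ∀ w ∈ Iinf fhat del W,
        nextSet fhat del w ⊆ proj (Iinf fhat del W) := by
  have hK : ∀ i, IsCompact ((Imap fhat del)^[i + 1] W) := fun i =>
    isCompact_iterate_Imap hfc hdc hd0 hWc (i + 1)
  have h_anti : Antitone fun i => (Imap fhat del)^[i + 1] W := fun i j hij =>
    antitone_iterate_Imap (Nat.succ_le_succ hij)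
  refine ⟨(hK 0).of_isClosed_subset (isClosed_iInter fun i => (hK i).isClosed)
    (iInter_subset _ 0), fun w hw x hx => ?_⟩
  rw [Iinf, proj, image_iInter_of_directed_isCompact h_anti.directed_ge hK continuous_fst]
  refine mem_iInter.2 fun i => ?_
  have hw' := mem_iInter.1 hw (i + 1)
  rw [Function.iterate_succ_apply'] at hw'
  exact hw'.2 hx

theorem stmt8 {n m : ℕ} (hn : 0 < n) (hm : 0 < m)
    (fhat del : (Fin n → ℝ) × (Fin m → ℝ) → Fin n → ℝ)
    (hfc : Continuous fhat) (hdc : Continuous del)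
    (hd0 : ∀ w, (0 : Fin n → ℝ) ≤ del w)
    (W : Set ((Fin n → ℝ) × (Fin m → ℝ))) (hWc : IsCompact W) :
    IsCompact (Iinf fhat del W) ∧
      ∀ w ∈ Iinf fhat del W,
        nextSet fhat del w ⊆ proj (Iinf fhat del W) :=
  stmt8_general fhat del hfc hdc hd0 W hWc
end

section
/- Let n, m be positive integers, let f̂ : ℝⁿ × ℝᵐ → ℝⁿ and δ : ℝⁿ × ℝᵐ → ℝⁿ be continuous with δ ≥ 0 componentwise, and define 𝕏₊(w) = Icc(f̂(w) − δ(w), f̂(w) + δ(w)). For 𝕎 ⊆ ℝⁿ × ℝᵐ define ℐ(𝕎) = { w ∈ 𝕎 : 𝕏₊(w) ⊆ proj(𝕎) } and ℐ^∞(𝕎) = ⋂_{i ≥ 1} ℐ^i(𝕎). Let 𝕎_N ⊆ ℝⁿ × ℝᵐ be any set. If 𝕎' ⊆ 𝕎_N is robust invariant, i.e. 𝕏₊(w) ⊆ proj(𝕎') for all w ∈ 𝕎', then 𝕎' ⊆ ℐ^∞(𝕎_N). In other words, ℐ^∞(𝕎_N) contains every robust invariant subset of 𝕎_N and hence is the maximal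 robust invariant subset of 𝕎_N. -/
open Set Filter Topology

theorem subset_Imap_of_robustInvariant {n m : ℕ}
    {fhat del : (Fin n → ℝ) × (Fin m → ℝ) → Fin n → ℝ} {W W' : Set ((Fin n → ℝ) × (Fin m → ℝ))}
    (hsub : W' ⊆ W) (hinv : ∀ w ∈ W', nextSet fhat del w ⊆ proj W') :
    W' ⊆ Imap fhat del W :=
  fun w hw => ⟨hsub hw, (hinv w hw).trans (image_mono hsub)⟩

theorem subset_iterate_Imap_of_robustInvariant {n m : ℕ}
    {fhat del : (Fin n → ℝ) × (Fin m → ℝ) → Fin n → ℝ} {W W' : Set ((Fin n → ℝ) × (Fin m → ℝ))}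
    (hsub : W' ⊆ W) (hinv : ∀ w ∈ W', nextSet fhat del w ⊆ proj W') (k : ℕ) :
    W' ⊆ (Imap fhat del)^[k] W := by
  induction k with
  | zero => exact hsub
  | succ k ih =>
    rw [Function.iterate_succ_apply']
    exact subset_Imap_of_robustInvariant ih hinv

theorem stmt10_general {n m : ℕ}
    (fhat del : (Fin n → ℝ) × (Fin m → ℝ) → Fin n → ℝ)
    (WN W' : Set ((Fin n → ℝ) × (Fin m → ℝ)))
    (hsub : W' ⊆ WN)
    (hinv : ∀ w ∈ W', nextSet fhat del w ⊆ proj W') :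
    W' ⊆ Iinf fhat del WN :=
  subset_iInter fun i => subset_iterate_Imap_of_robustInvariant hsub hinv (i + 1)

theorem stmt10 {n m : ℕ} (hn : 0 < n) (hm : 0 < m)
    (fhat del : (Fin n → ℝ) × (Fin m → ℝ) → Fin n → ℝ)
    (hfc : Continuous fhat) (hdc : Continuous del)
    (hd0 : ∀ w, (0 : Fin n → ℝ) ≤ del w)
    (WN W' : Set ((Fin n → ℝ) × (Fin m → ℝ)))
    (hsub : W' ⊆ WN)
    (hinv : ∀ w ∈ W', nextSet fhat del w ⊆ proj W') :
    W' ⊆ Iinf fhat del WN :=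
  stmt10_general fhat del WN W' hsub hinv
end

section
/- Let n, m be positive integers, let f̂ : ℝⁿ × ℝᵐ → ℝⁿ and δ : ℝⁿ × ℝᵐ → ℝⁿ be continuous with δ ≥ 0 componentwise, define 𝕏₊(x,u) = Icc(f̂(x,u) − δ(x,u), f̂(x,u) + δ(x,u)), and let L : ℝⁿ → ℝ be continuous. Let 𝕎_cons ⊆ ℝⁿ × ℝᵐ be compact and let α > 0. Then the robust negative-definite set 𝕎_N(L) = { (x,u) ∈ 𝕎_cons : ∀ x₊ ∈ 𝕏₊(x,u), L(x₊) − L(x) ≤ −α } is compact. -/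
/-! The box `nextSet fhat del w` is the image of the fixed cube `Icc (-1) 1` under
`t ↦ fhat w + t * del w`, which depends continuously on `w`. Hence a universally quantified
closed condition over the box is an intersection, over `t` in the cube, of closed conditions on
`w`, and the robust negative-definite set is a closed subset of the compact set `Wcons`. -/

open Set Filter Topology

theorem Set.image_add_mul_Icc_neg_one_one_s11 (a d : ℝ) (hd : 0 ≤ d) :
    (fun t ↦ a + t * d) '' Icc (-1) 1 = Icc (a - d) (a + d) := by
  rw [← image_image (a + ·) (· * d), image_mul_right_Icc (by norm_num) hd,
    image_const_add_Icc, neg_one_mul, one_mul, ← sub_eq_add_neg]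

theorem Set.image_add_mul_Icc_neg_one_one_pi {ι : Type*} (a d : ι → ℝ) (hd : 0 ≤ d) :
    (fun t ↦ a + t * d) '' Icc (-1) 1 = Icc (a - d) (a + d) := by
  have h := piMap_image_univ_pi (fun i t ↦ a i + t * d i) fun _ ↦ Icc (-1) 1
  simp only [image_add_mul_Icc_neg_one_one_s11 _ _ (hd _)] at h
  rwa [← pi_univ_Icc, ← pi_univ_Icc]

theorem isClosed_setOf_forall_mem_nextSet {n m : ℕ}
    {fhat del : (Fin n → ℝ) × (Fin m → ℝ) → Fin n → ℝ}
    (hfc : Continuous fhat) (hdc : Continuous del) (hd0 : ∀ w, 0 ≤ del w)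
    {C : Set (((Fin n → ℝ) × (Fin m → ℝ)) × (Fin n → ℝ))} (hC : IsClosed C) :
    IsClosed {w | ∀ xp ∈ nextSet fhat del w, (w, xp) ∈ C} := by
  have : {w | ∀ xp ∈ nextSet fhat del w, (w, xp) ∈ C} =
      ⋂ t ∈ Icc (-1 : Fin n → ℝ) 1, {w | (w, fhat w + t * del w) ∈ C} := by
    ext w
    simp only [nextSet, ← Set.image_add_mul_Icc_neg_one_one_pi _ _ (hd0 w), forall_mem_image,
      mem_iInter, mem_ofPred_eq]
  rw [this]
  exact isClosed_biInter fun t _ ↦ hC.preimage (by fun_prop)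

theorem stmt11_general {n m : ℕ}
    (fhat del : (Fin n → ℝ) × (Fin m → ℝ) → Fin n → ℝ)
    (hfc : Continuous fhat) (hdc : Continuous del)
    (hd0 : ∀ w, (0 : Fin n → ℝ) ≤ del w)
    (L : (Fin n → ℝ) → ℝ) (hLc : Continuous L)
    (Wcons : Set ((Fin n → ℝ) × (Fin m → ℝ))) (hWcons : IsCompact Wcons)
    (α : ℝ) :
    IsCompact {w ∈ Wcons | ∀ xp ∈ nextSet fhat del w, L xp - L w.1 ≤ -α} :=
  hWcons.inter_right <| isClosed_setOf_forall_mem_nextSet hfc hdc hd0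
    (C := {p | L p.2 - L p.1.1 ≤ -α}) (isClosed_le (by fun_prop) continuous_const)

theorem stmt11 {n m : ℕ} (hn : 0 < n) (hm : 0 < m)
    (fhat del : (Fin n → ℝ) × (Fin m → ℝ) → Fin n → ℝ)
    (hfc : Continuous fhat) (hdc : Continuous del)
    (hd0 : ∀ w, (0 : Fin n → ℝ) ≤ del w)
    (L : (Fin n → ℝ) → ℝ) (hLc : Continuous L)
    (Wcons : Set ((Fin n → ℝ) × (Fin m → ℝ))) (hWcons : IsCompact Wcons)
    (α : ℝ) (hα : 0 < α) :
    IsCompact {w ∈ Wcons | ∀ xp ∈ nextSet fhat del w, L xp - L w.1 ≤ -α} :=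
  stmt11_general fhat del hfc hdc hd0 L hLc Wcons hWcons α
end

section
/- Let n, m be positive integers, let f̂ : ℝⁿ × ℝᵐ → ℝⁿ and δ : ℝⁿ × ℝᵐ → ℝⁿ be continuous with δ ≥ 0 componentwise, and set f̲ = f̂ − δ and f̄ = f̂ + δ. Let w ∈ ℝⁿ × ℝᵐ and let (B_j)_{j ∈ ℕ} be a sequence of boxes in ℝⁿ × ℝᵐ with w ∈ B_j for all j and widths d(B_j) → 0, where d(B) is the maximum over coordinates of the side lengths of B. Suppose for each j there are vectors a₁(j), b₁(j), a₂(j), b₂(j) ∈ ℝⁿ such that f̲(w') ∈ Icc(a₁(j), b₁(j)) and f̄(w') ∈ Icc(a₂(j), b₂(j)) for all w' ∈ B_j, and such that these inclusion boxes are convergent, i.e. d(Icc(a₁(j), b₁(j))) → 0 and d(Icc(a₂(j), b₂(j))) → 0 as j → ∞. Then the interval-union boxes [𝕏₊](B_j) = Icc(min(a₁(j), a₂(j)), max(b₁(j), b₂(j))) converge to 𝕏₊(w) = Icc(f̲(w), f̄(w)): the lower endpoints min(a₁(j), a₂(j)) converge to f̲(w), the upper endpoints max(b₁(j), b₂(j))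 converge to f̄(w), and consequently d([𝕏₊](B_j)) converges to the maximum over coordinates i of (f̄_i(w) − f̲_i(w)) = 2 δ_i(w). -/
/-!
Since `w` lies in every `B_j`, the point `f̲(w)` lies in every inclusion box `Icc (a₁ j) (b₁ j)`;
as these widths tend to `0`, both endpoints are squeezed onto `f̲(w)`, and likewise `a₂ j, b₂ j`
converge to `f̄(w)`. Because `δ ≥ 0` gives `f̲(w) ≤ f̄(w)`, the componentwise minimum of the lower
endpoints tends to `f̲(w)` and the maximum of the upper ones to `f̄(w)`; the width, a finite
supremum of continuous functions of the endpoints, then tends to `max_i (f̄_i(w) - f̲_i(w))`.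
-/

open Set Filter Topology

/-- Width of a componentwise box `Icc a b` in `ℝⁿ`: the largest side length. -/
noncomputable def boxWidth {n : ℕ} (a b : Fin n → ℝ) : ℝ :=
  ⨆ i, (b i - a i)

/-- Width of a box `Icc l u` in the state-control space `ℝⁿ × ℝᵐ`:
the largest side length over all coordinates. -/
noncomputable def pboxWidth {n m : ℕ} (l u : (Fin n → ℝ) × (Fin m → ℝ)) : ℝ :=
  max (boxWidth l.1 u.1) (boxWidth l.2 u.2)

theorem Filter.Tendsto.ciSup_nhds_of_finite {ι α L : Type*} [Finite ι]
    [ConditionallyCompleteLattice L] [TopologicalSpace L] [ContinuousSup L]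
    {l : Filter α} {f : ι → α → L} {g : ι → L} (h : ∀ i, Tendsto (f i) l (𝓝 (g i))) :
    Tendsto (fun a => ⨆ i, f i a) l (𝓝 (⨆ i, g i)) := by
  rcases isEmpty_or_nonempty ι with hι | hι
  · simpa only [iSup_of_empty'] using tendsto_const_nhds
  · have := Fintype.ofFinite ι
    simp only [← Finset.sup'_univ_eq_ciSup]
    exact Tendsto.finset_sup'_nhds_apply _ fun i _ => h i

theorem sub_le_boxWidth {n : ℕ} (a b : Fin n → ℝ) (i : Fin n) : b i - a i ≤ boxWidth a b :=
  le_ciSup (f := fun i => b i - a i) (Set.finite_range _).bddAbove i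

theorem Filter.Tendsto.boxWidth {α : Type*} {n : ℕ} {l : Filter α} {a b : α → Fin n → ℝ}
    {a₀ b₀ : Fin n → ℝ} (ha : Tendsto a l (𝓝 a₀)) (hb : Tendsto b l (𝓝 b₀)) :
    Tendsto (fun x => boxWidth (a x) (b x)) l (𝓝 (boxWidth a₀ b₀)) :=
  Tendsto.ciSup_nhds_of_finite fun i =>
    (tendsto_pi_nhds.1 hb i).sub (tendsto_pi_nhds.1 ha i)

theorem tendsto_endpoints_of_mem_Icc_of_boxWidth_tendsto_zero {α : Type*} {n : ℕ}
    {l : Filter α} {a b : α → Fin n → ℝ} {c : Fin n → ℝ} (hc : ∀ x, c ∈ Icc (a x) (b x))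
    (hwidth : Tendsto (fun x => boxWidth (a x) (b x)) l (𝓝 0)) :
    Tendsto a l (𝓝 c) ∧ Tendsto b l (𝓝 c) := by
  have hlower : ∀ i, Tendsto (fun x => c i - boxWidth (a x) (b x)) l (𝓝 (c i)) := fun i => by
    simpa using tendsto_const_nhds.sub hwidth
  have hupper : ∀ i, Tendsto (fun x => c i + boxWidth (a x) (b x)) l (𝓝 (c i)) := fun i => by
    simpa using tendsto_const_nhds.add hwidth
  constructor
  · refine tendsto_pi_nhds.2 fun i =>
      tendsto_of_tendsto_of_tendsto_of_le_of_le (hlower i) tendsto_const_nhds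
        (fun x => ?_) (fun x => (hc x).1 i)
    linarith [sub_le_boxWidth (a x) (b x) i, (hc x).2 i]
  · refine tendsto_pi_nhds.2 fun i =>
      tendsto_of_tendsto_of_tendsto_of_le_of_le tendsto_const_nhds (hupper i)
        (fun x => (hc x).2 i) (fun x => ?_)
    linarith [sub_le_boxWidth (a x) (b x) i, (hc x).1 i]

theorem stmt13_general {n m : ℕ}
    (fhat del : (Fin n → ℝ) × (Fin m → ℝ) → Fin n → ℝ)
    (hd0 : ∀ w, (0 : Fin n → ℝ) ≤ del w)
    (w : (Fin n → ℝ) × (Fin m → ℝ))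
    (lo hi : ℕ → (Fin n → ℝ) × (Fin m → ℝ))
    (hw : ∀ j, w ∈ Set.Icc (lo j) (hi j))
    (a₁ b₁ a₂ b₂ : ℕ → Fin n → ℝ)
    (hincl₁ : ∀ j, ∀ w' ∈ Set.Icc (lo j) (hi j),
      fhat w' - del w' ∈ Set.Icc (a₁ j) (b₁ j))
    (hincl₂ : ∀ j, ∀ w' ∈ Set.Icc (lo j) (hi j),
      fhat w' + del w' ∈ Set.Icc (a₂ j) (b₂ j))
    (hconv₁ : Tendsto (fun j => boxWidth (a₁ j) (b₁ j)) atTop (𝓝 0))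
    (hconv₂ : Tendsto (fun j => boxWidth (a₂ j) (b₂ j)) atTop (𝓝 0)) :
    Tendsto (fun j => a₁ j ⊓ a₂ j) atTop (𝓝 (fhat w - del w)) ∧
      Tendsto (fun j => b₁ j ⊔ b₂ j) atTop (𝓝 (fhat w + del w)) ∧
      Tendsto (fun j => boxWidth (a₁ j ⊓ a₂ j) (b₁ j ⊔ b₂ j)) atTop
        (𝓝 (⨆ i, 2 * del w i)) := by
  obtain ⟨ha₁, hb₁⟩ := tendsto_endpoints_of_mem_Icc_of_boxWidth_tendsto_zero
    (fun j => hincl₁ j w (hw j)) hconv₁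
  obtain ⟨ha₂, hb₂⟩ := tendsto_endpoints_of_mem_Icc_of_boxWidth_tendsto_zero
    (fun j => hincl₂ j w (hw j)) hconv₂
  have hle : fhat w - del w ≤ fhat w + del w :=
    (sub_le_self _ (hd0 w)).trans (le_add_of_nonneg_right (hd0 w))
  have hlow : Tendsto (fun j => a₁ j ⊓ a₂ j) atTop (𝓝 (fhat w - del w)) := by
    refine tendsto_pi_nhds.2 fun i => ?_
    simpa only [Pi.inf_apply, inf_eq_left.2 (hle i)] using
      (tendsto_pi_nhds.1 ha₁ i).inf_nhds (tendsto_pi_nhds.1 ha₂ i)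
  have hhigh : Tendsto (fun j => b₁ j ⊔ b₂ j) atTop (𝓝 (fhat w + del w)) := by
    refine tendsto_pi_nhds.2 fun i => ?_
    simpa only [Pi.sup_apply, sup_eq_right.2 (hle i)] using
      (tendsto_pi_nhds.1 hb₁ i).sup_nhds (tendsto_pi_nhds.1 hb₂ i)
  refine ⟨hlow, hhigh, ?_⟩
  convert hlow.boxWidth hhigh using 2
  simp only [boxWidth, Pi.add_apply, Pi.sub_apply]
  congr 1
  ext i
  ring

theorem stmt13 {n m : ℕ} (hn : 0 < n) (hm : 0 < m)
    (fhat del : (Fin n → ℝ) × (Fin m → ℝ) → Fin n → ℝ)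
    (hfc : Continuous fhat) (hdc : Continuous del)
    (hd0 : ∀ w, (0 : Fin n → ℝ) ≤ del w)
    (w : (Fin n → ℝ) × (Fin m → ℝ))
    (lo hi : ℕ → (Fin n → ℝ) × (Fin m → ℝ))
    (hw : ∀ j, w ∈ Set.Icc (lo j) (hi j))
    (hwidth : Tendsto (fun j => pboxWidth (lo j) (hi j)) atTop (𝓝 0))
    (a₁ b₁ a₂ b₂ : ℕ → Fin n → ℝ)
    (hincl₁ : ∀ j, ∀ w' ∈ Set.Icc (lo j) (hi j),
      fhat w' - del w' ∈ Set.Icc (a₁ j) (b₁ j))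
    (hincl₂ : ∀ j, ∀ w' ∈ Set.Icc (lo j) (hi j),
      fhat w' + del w' ∈ Set.Icc (a₂ j) (b₂ j))
    (hconv₁ : Tendsto (fun j => boxWidth (a₁ j) (b₁ j)) atTop (𝓝 0))
    (hconv₂ : Tendsto (fun j => boxWidth (a₂ j) (b₂ j)) atTop (𝓝 0)) :
    Tendsto (fun j => a₁ j ⊓ a₂ j) atTop (𝓝 (fhat w - del w)) ∧
      Tendsto (fun j => b₁ j ⊔ b₂ j) atTop (𝓝 (fhat w + del w)) ∧
      Tendsto (fun j => boxWidth (a₁ j ⊓ a₂ j) (b₁ j ⊔ b₂ j)) atTop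
        (𝓝 (⨆ i, 2 * del w i)) :=
  stmt13_general fhat del hd0 w lo hi hw a₁ b₁ a₂ b₂ hincl₁ hincl₂ hconv₁ hconv₂
end
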